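/- Let l : ℝ → ℝ be differentiable with l(t) > 0, l'(t) < 0, and l'(t)/l(t) ≥ −3/(4t) for all t > 0. Then for every x ∈ ℝⁿ \ {0}, every eigenvalue of the linear map A = l(|x|)·Id + (l'(|x|)/|x|)·(x ⊗ xᵀ) lies in the interval [l(|x|)/4, l(|x|)]; in particular the operator norm of A is at most l(|x|), A is invertible, and det(A) ≥ l(|x|)ⁿ/4. -/

import Mathlib

/-!
The map `A = a • id + b • (x ⊗ xᵀ)` acts as `a` on `x^⊥` and as `a + b‖x‖²` on `ℝ x`, and its
quadratic form is `⟪A v, v⟫ = a‖v‖² + b⟪x, v⟫²`. With `a = l(r)`, `b = l'(r)/r < 0`, `r = ‖x‖`,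
Cauchy–Schwarz puts every eigenvalue between `a + b r² = l(r) + r l'(r)` and `a`, and the ratio
hypothesis gives `l(r) + r l'(r) ≥ l(r)/4`. The same bound `-a ≤ a + b r²` yields
`‖A v‖² = a²‖v‖² + b (2a + b r²)⟪x, v⟫² ≤ a²‖v‖²`, and the matrix determinant lemma in an
orthonormal basis gives `det A = aⁿ⁻¹ (a + b r²) ≥ aⁿ / 4`, so in particular `A` is invertible.
-/

open scoped RealInnerProductSpace

section ScalarAddRankOne

variable {E : Type*} [NormedAddCommGroup E] [InnerProductSpace ℝ E]

noncomputable def scalarAddRankOne (a b : ℝ) (x : E) : E →L[ℝ] E :=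
  a • ContinuousLinearMap.id ℝ E + b • (innerSL ℝ x).smulRight x

variable {a b : ℝ} {x : E}

theorem scalarAddRankOne_apply (v : E) :
    scalarAddRankOne a b x v = a • v + (b * ⟪x, v⟫) • x := by
  simp [scalarAddRankOne, mul_smul]

theorem inner_scalarAddRankOne_apply_self (v : E) :
    ⟪scalarAddRankOne a b x v, v⟫ = a * ‖v‖ ^ 2 + b * ⟪x, v⟫ ^ 2 := by
  rw [scalarAddRankOne_apply, inner_add_left, real_inner_smul_left, real_inner_smul_left,
    real_inner_self_eq_norm_sq, real_inner_comm v x]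
  ring

theorem norm_scalarAddRankOne_apply_sq (v : E) :
    ‖scalarAddRankOne a b x v‖ ^ 2 =
      a ^ 2 * ‖v‖ ^ 2 + b * (2 * a + b * ‖x‖ ^ 2) * ⟪x, v⟫ ^ 2 := by
  rw [scalarAddRankOne_apply, norm_add_sq_real, real_inner_smul_left, real_inner_smul_right,
    norm_smul, norm_smul, real_inner_comm v x, Real.norm_eq_abs, Real.norm_eq_abs, mul_pow,
    mul_pow, sq_abs, sq_abs]
  ring

theorem mem_Icc_of_hasEigenvalue_scalarAddRankOne (hb : b ≤ 0) {μ : ℝ}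
    (hμ : Module.End.HasEigenvalue (scalarAddRankOne a b x).toLinearMap μ) :
    μ ∈ Set.Icc (a + b * ‖x‖ ^ 2) a := by
  obtain ⟨v, hv⟩ := hμ.exists_hasEigenvector
  have hv_pos : 0 < ‖v‖ ^ 2 := by have := norm_pos_iff.mpr hv.2; positivity
  have hquad : μ * ‖v‖ ^ 2 = a * ‖v‖ ^ 2 + b * ⟪x, v⟫ ^ 2 := by
    rw [← inner_scalarAddRankOne_apply_self, ← real_inner_self_eq_norm_sq,
      ← real_inner_smul_left]
    exact congrArg (⟪·, v⟫) hv.apply_eq_smul.symm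
  have hcs : ⟪x, v⟫ ^ 2 ≤ ‖x‖ ^ 2 * ‖v‖ ^ 2 := by
    rw [← mul_pow, ← sq_abs]
    exact pow_le_pow_left₀ (abs_nonneg _) (abs_real_inner_le_norm x v) 2
  constructor
  · nlinarith [mul_le_mul_of_nonpos_left hcs hb]
  · nlinarith [mul_nonpos_of_nonpos_of_nonneg hb (sq_nonneg ⟪x, v⟫)]

theorem norm_scalarAddRankOne_le (ha : 0 ≤ a) (hb : b ≤ 0) (h : -a ≤ a + b * ‖x‖ ^ 2) :
    ‖scalarAddRankOne a b x‖ ≤ a := by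
  refine ContinuousLinearMap.opNorm_le_bound _ ha fun v => ?_
  have hcorr : b * (2 * a + b * ‖x‖ ^ 2) * ⟪x, v⟫ ^ 2 ≤ 0 :=
    mul_nonpos_of_nonpos_of_nonneg (mul_nonpos_of_nonpos_of_nonneg hb (by linarith)) (sq_nonneg _)
  refine (pow_le_pow_iff_left₀ (norm_nonneg _) (by positivity) two_ne_zero).mp ?_
  rw [norm_scalarAddRankOne_apply_sq, mul_pow]
  linarith

theorem toMatrix_scalarAddRankOne {ι : Type*} [Fintype ι] [DecidableEq ι]
    (e : OrthonormalBasis ι ℝ E) :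
    LinearMap.toMatrix e.toBasis e.toBasis (scalarAddRankOne a b x).toLinearMap =
      a • 1 + b • (Matrix.replicateCol Unit (fun i => ⟪e i, x⟫) *
        Matrix.replicateRow Unit (fun i => ⟪e i, x⟫)) := by
  ext i j
  simp [LinearMap.toMatrix_apply, scalarAddRankOne_apply, Matrix.one_apply, Matrix.mul_apply,
    e.repr_apply_apply, real_inner_comm x]
  ring

theorem mul_det_scalarAddRankOne [FiniteDimensional ℝ E] (ha : a ≠ 0) :
    a * LinearMap.det (scalarAddRankOne a b x).toLinearMap =
      a ^ Module.finrank ℝ E * (a + b * ‖x‖ ^ 2) := by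
  set e := stdOrthonormalBasis ℝ E
  set u : Fin (Module.finrank ℝ E) → ℝ := fun i => ⟪e i, x⟫
  have hfactor :
      a • (1 : Matrix _ _ ℝ) + b • (Matrix.replicateCol Unit u * Matrix.replicateRow Unit u) =
      a • (1 + Matrix.replicateCol Unit ((b / a) • u) * Matrix.replicateRow Unit u) := by
    rw [Matrix.replicateCol_smul, Matrix.smul_mul, smul_add, smul_smul, mul_div_cancel₀ _ ha]
  have hu : u ⬝ᵥ u = ‖x‖ ^ 2 := by
    simp only [dotProduct, ← sq, u, e.sum_sq_inner_right]
  rw [← LinearMap.det_toMatrix e.toBasis, toMatrix_scalarAddRankOne, hfactor, Matrix.det_smul,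
    Matrix.det_one_add_replicateCol_mul_replicateRow, dotProduct_smul, hu, Fintype.card_fin,
    smul_eq_mul]
  field_simp

end ScalarAddRankOne

theorem quarter_le_add_mul_of_div_ge {L c t : ℝ} (ht : 0 < t) (hL : 0 < L)
    (h : c / L ≥ -(3 / (4 * t))) : L / 4 ≤ L + c / t * t ^ 2 := by
  have hc : -(3 / 4) * L ≤ c * t := by
    rw [ge_iff_le, le_div_iff₀ hL] at h
    calc -(3 / 4) * L = -(3 / (4 * t)) * L * t := by field_simp
      _ ≤ c * t := by gcongr
  calc L / 4 ≤ L + c * t := by linarith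
    _ = L + c / t * t ^ 2 := by field_simp

theorem stmt_2_general (n : ℕ) (l : ℝ → ℝ)
    (hpos : ∀ t > (0:ℝ), 0 < l t)
    (hneg : ∀ t > (0:ℝ), deriv l t < 0)
    (hratio : ∀ t > (0:ℝ), deriv l t / l t ≥ -(3 / (4 * t)))
    (x : EuclideanSpace ℝ (Fin n)) (hx : x ≠ 0) :
    let A : EuclideanSpace ℝ (Fin n) →L[ℝ] EuclideanSpace ℝ (Fin n) :=
      l ‖x‖ • ContinuousLinearMap.id ℝ _ +
        (deriv l ‖x‖ / ‖x‖) • ((innerSL ℝ x).smulRight x)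
    (∀ μ : ℝ, Module.End.HasEigenvalue (A.toLinearMap) μ →
        μ ∈ Set.Icc (l ‖x‖ / 4) (l ‖x‖)) ∧
    ‖A‖ ≤ l ‖x‖ ∧
    Function.Bijective A ∧
    LinearMap.det A.toLinearMap ≥ l ‖x‖ ^ n / 4 := by
  have hr : 0 < ‖x‖ := norm_pos_iff.mpr hx
  have ha : 0 < l ‖x‖ := hpos _ hr
  have hb : deriv l ‖x‖ / ‖x‖ ≤ 0 := div_nonpos_of_nonpos_of_nonneg (hneg _ hr).le hr.le
  have hquarter := quarter_le_add_mul_of_div_ge hr ha (hratio _ hr)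
  change let A := scalarAddRankOne (l ‖x‖) (deriv l ‖x‖ / ‖x‖) x; _
  intro A
  have hdet : l ‖x‖ * LinearMap.det A.toLinearMap =
      l ‖x‖ ^ n * (l ‖x‖ + deriv l ‖x‖ / ‖x‖ * ‖x‖ ^ 2) := by
    rw [mul_det_scalarAddRankOne ha.ne', finrank_euclideanSpace_fin]
  have hdet_ge : l ‖x‖ ^ n / 4 ≤ LinearMap.det A.toLinearMap := by
    refine le_of_mul_le_mul_left ?_ ha
    rw [hdet]
    calc l ‖x‖ * (l ‖x‖ ^ n / 4) = l ‖x‖ ^ n * (l ‖x‖ / 4) := by ring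
      _ ≤ _ := by gcongr
  refine ⟨fun μ hμ => ?_, norm_scalarAddRankOne_le ha.le hb (by linarith), ?_, hdet_ge⟩
  · have := mem_Icc_of_hasEigenvalue_scalarAddRankOne hb hμ
    exact ⟨hquarter.trans this.1, this.2⟩
  · have hdet_pos : 0 < LinearMap.det A.toLinearMap := lt_of_lt_of_le (by positivity) hdet_ge
    exact Module.End.isUnit_iff _ |>.mp <|
      (LinearMap.isUnit_iff_isUnit_det _).mpr hdet_pos.ne'.isUnit

theorem stmt_2 (n : ℕ) (l : ℝ → ℝ) (hl : Differentiable ℝ l)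
    (hpos : ∀ t > (0:ℝ), 0 < l t)
    (hneg : ∀ t > (0:ℝ), deriv l t < 0)
    (hratio : ∀ t > (0:ℝ), deriv l t / l t ≥ -(3 / (4 * t)))
    (x : EuclideanSpace ℝ (Fin n)) (hx : x ≠ 0) :
    let A : EuclideanSpace ℝ (Fin n) →L[ℝ] EuclideanSpace ℝ (Fin n) :=
      l ‖x‖ • ContinuousLinearMap.id ℝ _ +
        (deriv l ‖x‖ / ‖x‖) • ((innerSL ℝ x).smulRight x)
    (∀ μ : ℝ, Module.End.HasEigenvalue (A.toLinearMap) μ →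
        μ ∈ Set.Icc (l ‖x‖ / 4) (l ‖x‖)) ∧
    ‖A‖ ≤ l ‖x‖ ∧
    Function.Bijective A ∧
    LinearMap.det A.toLinearMap ≥ l ‖x‖ ^ n / 4 :=
  stmt_2_general n l hpos hneg hratio x hx
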